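/- Preservation of the terminal shapeable-SOC bounds under one step of the constant-rate policy: Let e_des, e, η, ΔT, c_max be real with η > 0, ΔT > 0, c_max ≥ 0, and let k, N, k_out be integers with k + N < k_out (so k_out − (k+N) ≥ 1). Assume 0 ≤ e_des − e ≤ η ΔT (k_out − (k+N)) c_max, and let e' = e + η ΔT · (e_des − e)/((k_out − (k+N)) η ΔT). Then e' ≤ e_des and e_des − e' ≤ η ΔT (k_out − (k+N+1)) c_max. -/
import Mathlib


/-- Preservation of the terminal shapeable-SOC bounds under one step of
the constant-rate candidate charging policy. -/
theorem terminal_shapeable_bounds_preserved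
    (e_des e η ΔT c_max : ℝ) (k N k_out : ℤ)
    (hη : 0 < η) (hΔT : 0 < ΔT) (hc : 0 ≤ c_max) (hk : k + N < k_out)
    (hlow : 0 ≤ e_des - e)
    (hup : e_des - e ≤ η * ΔT * ((k_out - (k + N) : ℤ) : ℝ) * c_max)
    (e' : ℝ)
    (he' : e' = e + η * ΔT *
      ((e_des - e) / (((k_out - (k + N) : ℤ) : ℝ) * η * ΔT))) :
    e' ≤ e_des ∧ e_des - e' ≤ η * ΔT * ((k_out - (k + N + 1) : ℤ) : ℝ) * c_max := by
  have hm : (1 : ℝ) ≤ ((k_out - (k + N) : ℤ) : ℝ) := by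
    exact_mod_cast (by omega : (1 : ℤ) ≤ k_out - (k + N))
  set m : ℝ := ((k_out - (k + N) : ℤ) : ℝ) with hmdef
  have hm0 : 0 < m := lt_of_lt_of_le one_pos hm
  have hcast : ((k_out - (k + N + 1) : ℤ) : ℝ) = m - 1 := by
    push_cast [hmdef]; ring
  have he'' : e' = e + (e_des - e) / m := by
    rw [he']
    field_simp
  constructor
  · rw [he'']
    have : (e_des - e) / m ≤ e_des - e := by
      apply div_le_self hlow hm
    linarith
  · rw [hcast, he'']
    have key : e_des - (e + (e_des - e) / m) = (e_des - e) * (m - 1) / m := by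
      field_simp; ring
    rw [key]
    rw [div_le_iff₀ hm0]
    have hm1 : 0 ≤ m - 1 := by linarith
    nlinarith [mul_le_mul_of_nonneg_right hup hm1]
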